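/- Let x₁,…,x_n ∈ ℝᵈ, let σ_x be the largest singular value of the d×n matrix X whose columns are x₁,…,x_n, and let σ : ℝ → ℝ be differentiable with |σ′(u)| ≤ L for all u ∈ ℝ. For w ∈ ℝᵈ, let L(w) denote the d×n real matrix whose i-th column is σ′(wᵀx_i) x_i. Let a ∈ ℝ, m > 0, t > 0, let δ : ℝ → ℝⁿ be continuous on [0,t], and suppose w : ℝ → ℝᵈ is differentiable with w′(τ) = −(a/√m) L(w(τ)) δ(τ) for all τ ∈ [0,t]. Then ‖w(t) − w(0)‖ ≤ (|a|/√m) L σ_x ∫₀ᵗ ‖δ(τ)‖ dτ. -/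

import Mathlib

/-!
Writing `L(w) = X · diag(σ′(⟪w, xⱼ⟫))`, submultiplicativity of the spectral norm gives
`‖L(w)‖ ≤ σₓ L`, so the speed of `w` is at most `(|a|/√m) L σₓ ‖δ(τ)‖`; the displacement of `w`
is at most the integral of its speed.
-/

open scoped RealInnerProductSpace

/-- The spectral norm (largest singular value) of a real matrix, i.e. the operator
norm of the induced map between Euclidean spaces. -/
noncomputable def opNorm {ι κ : Type*} [Fintype ι] [Fintype κ] [DecidableEq κ]
    (A : Matrix ι κ ℝ) : ℝ :=
  ‖LinearMap.toContinuousLinearMap (Matrix.toEuclideanLin A)‖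

open Matrix Set
open scoped Matrix.Norms.L2Operator

section SpectralNorm

variable {ι κ : Type*} [Fintype ι] [Fintype κ] [DecidableEq κ]

theorem opNorm_eq_l2_opNorm (A : Matrix ι κ ℝ) : opNorm A = ‖A‖ := rfl

theorem norm_toEuclideanLin_le_opNorm_mul (A : Matrix ι κ ℝ) (y : EuclideanSpace ℝ κ) :
    ‖toEuclideanLin A y‖ ≤ opNorm A * ‖y‖ :=
  (LinearMap.toContinuousLinearMap (toEuclideanLin A)).le_opNorm y

theorem opNorm_mul_diagonal_le (X : Matrix ι κ ℝ) {c : κ → ℝ} {C : ℝ} (hC : 0 ≤ C)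
    (hc : ∀ j, |c j| ≤ C) : opNorm (X * diagonal c) ≤ opNorm X * C := by
  have hdiag : ‖(diagonal c : Matrix κ κ ℝ)‖ ≤ C := by
    rw [l2_opNorm_diagonal]
    exact (pi_norm_le_iff_of_nonneg hC).2 fun j => (Real.norm_eq_abs _).trans_le (hc j)
  rw [opNorm_eq_l2_opNorm, opNorm_eq_l2_opNorm]
  exact (l2_opNorm_mul X _).trans (by gcongr)

end SpectralNorm

theorem stmt6_general {d n : ℕ} (x : Fin n → EuclideanSpace ℝ (Fin d))
    (X : Matrix (Fin d) (Fin n) ℝ) (hX : ∀ i j, X i j = x j i)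
    (σx : ℝ) (hσx : σx = opNorm X)
    (L : ℝ) (σ : ℝ → ℝ)
    (hbound : ∀ u : ℝ, |deriv σ u| ≤ L)
    (Lm : EuclideanSpace ℝ (Fin d) → Matrix (Fin d) (Fin n) ℝ)
    (hLm : ∀ v i j, Lm v i j = deriv σ (⟪v, x j⟫) * x j i)
    (a m t : ℝ) (ht : 0 < t)
    (δ : ℝ → EuclideanSpace ℝ (Fin n)) (hδ : ContinuousOn δ (Set.Icc 0 t))
    (w : ℝ → EuclideanSpace ℝ (Fin d)) (hw : Differentiable ℝ w)
    (hode : ∀ τ ∈ Set.Icc (0 : ℝ) t,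
      deriv w τ = -((a / Real.sqrt m) • (Matrix.toEuclideanLin (Lm (w τ))) (δ τ))) :
    ‖w t - w 0‖ ≤ (|a| / Real.sqrt m) * L * σx * ∫ τ in (0 : ℝ)..t, ‖δ τ‖ := by
  have hL : 0 ≤ L := (abs_nonneg _).trans (hbound 0)
  have hLm_le : ∀ v, opNorm (Lm v) ≤ σx * L := fun v => by
    have : Lm v = X * diagonal fun j => deriv σ ⟪v, x j⟫ := by
      ext i j
      rw [hLm, mul_diagonal, hX, mul_comm]
    exact this ▸ hσx ▸ opNorm_mul_diagonal_le X hL fun j => hbound _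
  have hspeed : ∀ τ ∈ Ioo 0 t, ‖deriv w τ‖ ≤ |a| / √m * L * σx * ‖δ τ‖ := fun τ hτ => by
    rw [hode τ (Ioo_subset_Icc_self hτ), norm_neg, norm_smul, Real.norm_eq_abs, abs_div,
      abs_of_nonneg (Real.sqrt_nonneg m)]
    calc |a| / √m * ‖toEuclideanLin (Lm (w τ)) (δ τ)‖
        ≤ |a| / √m * (σx * L * ‖δ τ‖) := by
          gcongr
          exact (norm_toEuclideanLin_le_opNorm_mul _ _).trans (by gcongr; exact hLm_le _)
      _ = |a| / √m * L * σx * ‖δ τ‖ := by ring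
  calc ‖w t - w 0‖ ≤ ∫ τ in (0 : ℝ)..t, |a| / √m * L * σx * ‖δ τ‖ :=
        norm_sub_le_integral_of_norm_deriv_le_of_le ht.le hw.continuous.continuousOn
          hw.differentiableOn (.of_forall hspeed)
          ((continuousOn_const.mul hδ.norm).intervalIntegrable_of_Icc ht.le)
    _ = _ := intervalIntegral.integral_const_mul _ _

/-- Supplement, Lemma 4: for the weight dynamics w′(τ) = −(a/√m) L(w(τ)) δ(τ), where L(w)
has columns σ′(wᵀxᵢ)xᵢ and |σ′| ≤ L, the total movement of the weight vector satisfies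
‖w(t) − w(0)‖ ≤ (|a|/√m) L σₓ ∫₀ᵗ ‖δ(τ)‖ dτ. -/
theorem stmt6 {d n : ℕ} (x : Fin n → EuclideanSpace ℝ (Fin d))
    (X : Matrix (Fin d) (Fin n) ℝ) (hX : ∀ i j, X i j = x j i)
    (σx : ℝ) (hσx : σx = opNorm X)
    (L : ℝ) (σ : ℝ → ℝ) (hσ : Differentiable ℝ σ)
    (hbound : ∀ u : ℝ, |deriv σ u| ≤ L)
    (Lm : EuclideanSpace ℝ (Fin d) → Matrix (Fin d) (Fin n) ℝ)
    (hLm : ∀ v i j, Lm v i j = deriv σ (⟪v, x j⟫) * x j i)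
    (a m t : ℝ) (hm : 0 < m) (ht : 0 < t)
    (δ : ℝ → EuclideanSpace ℝ (Fin n)) (hδ : ContinuousOn δ (Set.Icc 0 t))
    (w : ℝ → EuclideanSpace ℝ (Fin d)) (hw : Differentiable ℝ w)
    (hode : ∀ τ ∈ Set.Icc (0 : ℝ) t,
      deriv w τ = -((a / Real.sqrt m) • (Matrix.toEuclideanLin (Lm (w τ))) (δ τ))) :
    ‖w t - w 0‖ ≤ (|a| / Real.sqrt m) * L * σx * ∫ τ in (0 : ℝ)..t, ‖δ τ‖ :=
  stmt6_general x X hX σx hσx L σ hbound Lm hLm a m t ht δ hδ w hw hode
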